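/- Let G be a finite connected weighted graph with more than one vertex and Ψ(f)=⟨f,ψ⟩ with Ψ(χ_G) ≠ 0. Then for every f ∈ ℓ²(G): ‖f − (Ψ(f)/Ψ(χ_G)) χ_G‖² ≤ (θ/λ₁) ‖∇f‖², where θ = |G|‖ψ‖²/|Ψ(χ_G)|². -/

import Mathlib

open Finset

noncomputable def lap {V : Type*} [Fintype V] (w : V → V → ℝ) (f : V → ℂ) : V → ℂ :=
  fun v => ∑ u, (f v - f u) * (w v u : ℂ)

noncomputable def gip {V : Type*} [Fintype V] (f g : V → ℂ) : ℂ :=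
  ∑ v, f v * (starRingEnd ℂ) (g v)

noncomputable def gradSq {V : Type*} [Fintype V] (w : V → V → ℝ) (f : V → ℂ) : ℝ :=
  (1 / 2) * ∑ u, ∑ v, ‖f u - f v‖ ^ 2 * w u v

noncomputable def normSq {V : Type*} [Fintype V] (f : V → ℂ) : ℝ := ∑ v, ‖f v‖ ^ 2

/-- `μ` is an eigenvalue of the weighted graph Laplacian. -/
def IsEigen {V : Type*} [Fintype V] (w : V → V → ℝ) (μ : ℝ) : Prop :=
  ∃ g : V → ℂ, g ≠ 0 ∧ lap w g = fun v => (μ : ℂ) * g v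

/-!
Put `g = f - (Ψ(f)/Ψ(χ)) χ`, so that `g ⊥ ψ`, and let `h = f - mean(f) χ` be the component of `f`
(and of `g`) orthogonal to `χ`. The Laplacian is self-adjoint and, `G` being connected, its kernel
consists of the constants; expanding `h` in an eigenbasis gives `λ₁ ‖h‖² ≤ ‖∇h‖² = ‖∇f‖²`.
Since `g - h` is a multiple of `χ` and `g ⊥ ψ`, Bessel's inequality for the orthogonal pair `χ, h`
gives `‖g‖² |Ψ(χ)|² ≤ |G| ‖ψ‖² ‖h‖²`.
-/

section InnerProductSpace

variable {𝕜 E : Type*} [RCLike 𝕜] [NormedAddCommGroup E] [InnerProductSpace 𝕜 E]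

local notation "⟪" x ", " y "⟫" => inner 𝕜 x y

/-- Bessel's inequality for the orthogonal pair `e`, `h`, with denominators cleared. -/
theorem norm_sq_mul_norm_inner_sq_add_le {e h : E} (heh : ⟪e, h⟫ = 0) (ψ : E) :
    ‖e‖ ^ 2 * ‖⟪ψ, h⟫‖ ^ 2 + ‖h‖ ^ 2 * ‖⟪ψ, e⟫‖ ^ 2 ≤ ‖e‖ ^ 2 * ‖h‖ ^ 2 * ‖ψ‖ ^ 2 := by
  set p := (𝕜 ∙ e).starProjection ψ
  have hp : p ∈ 𝕜 ∙ e := Submodule.starProjection_apply_mem _ ψ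
  have hq : ψ - p ∈ (𝕜 ∙ e)ᗮ := Submodule.sub_starProjection_mem_orthogonal ψ
  have hh : h ∈ (𝕜 ∙ e)ᗮ := Submodule.mem_orthogonal_singleton_iff_inner_right.2 heh
  have hψh : ⟪ψ, h⟫ = ⟪ψ - p, h⟫ := by
    rw [inner_sub_left, Submodule.inner_right_of_mem_orthogonal hp hh, sub_zero]
  have hψe : ⟪ψ, e⟫ = ⟪p, e⟫ := by
    rw [← sub_add_cancel ψ p, inner_add_left,
      Submodule.inner_left_of_mem_orthogonal (Submodule.mem_span_singleton_self e) hq, zero_add]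
  have hpyth : ‖ψ‖ ^ 2 = ‖p‖ ^ 2 + ‖ψ - p‖ ^ 2 := by
    simpa only [sq, add_sub_cancel] using
      norm_add_sq_eq_norm_sq_add_norm_sq_of_inner_eq_zero p (ψ - p)
        (Submodule.inner_right_of_mem_orthogonal hp hq)
  have hcs₁ : ‖⟪ψ - p, h⟫‖ ^ 2 ≤ ‖ψ - p‖ ^ 2 * ‖h‖ ^ 2 := by
    rw [← mul_pow]; gcongr; exact norm_inner_le_norm _ _
  have hcs₂ : ‖⟪p, e⟫‖ ^ 2 ≤ ‖p‖ ^ 2 * ‖e‖ ^ 2 := by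
    rw [← mul_pow]; gcongr; exact norm_inner_le_norm _ _
  rw [hψh, hψe, hpyth]
  nlinarith [mul_le_mul_of_nonneg_left hcs₁ (sq_nonneg ‖e‖),
    mul_le_mul_of_nonneg_left hcs₂ (sq_nonneg ‖h‖)]

theorem norm_sub_smul_sq_mul_norm_inner_sq_le {e ψ x : E} {s t : 𝕜} (hs : ⟪e, x - s • e⟫ = 0)
    (ht : ⟪ψ, x - t • e⟫ = 0) :
    ‖x - t • e‖ ^ 2 * ‖⟪ψ, e⟫‖ ^ 2 ≤ ‖e‖ ^ 2 * ‖ψ‖ ^ 2 * ‖x - s • e‖ ^ 2 := by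
  set h := x - s • e
  have hx : x - t • e = h + (s - t) • e := by simp only [h, sub_smul]; abel
  have hpyth : ‖x - t • e‖ ^ 2 = ‖h‖ ^ 2 + ‖s - t‖ ^ 2 * ‖e‖ ^ 2 := by
    have horth : ⟪h, (s - t) • e⟫ = 0 := by
      rw [inner_smul_right, inner_eq_zero_symm.1 hs, mul_zero]
    rw [hx, ← mul_pow, ← norm_smul, sq, sq, sq,
      norm_add_sq_eq_norm_sq_add_norm_sq_of_inner_eq_zero _ _ horth]
  have hψh : ⟪ψ, h⟫ = -((s - t) * ⟪ψ, e⟫) := by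
    rw [hx, inner_add_right, inner_smul_right] at ht
    exact eq_neg_of_add_eq_zero_left ht
  have hbessel := norm_sq_mul_norm_inner_sq_add_le hs ψ
  rw [hψh, norm_neg, norm_mul] at hbessel
  rw [hpyth]
  linarith

theorem LinearMap.IsSymmetric.mul_norm_sq_le_re_inner_apply [FiniteDimensional 𝕜 E]
    {T : E →ₗ[𝕜] E} (hT : T.IsSymmetric) {lam : ℝ}
    (hlam : ∀ (μ : ℝ) (y : E), μ ≠ 0 → y ≠ 0 → T y = (μ : 𝕜) • y → lam ≤ μ)
    {x : E} (hx : ∀ y, T y = 0 → ⟪y, x⟫ = 0) :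
    lam * ‖x‖ ^ 2 ≤ RCLike.re ⟪x, T x⟫ := by
  let b := hT.eigenvectorBasis rfl
  have hnorm : ‖x‖ ^ 2 = ∑ i, ‖b.repr x i‖ ^ 2 := by
    rw [← b.repr.norm_map, EuclideanSpace.norm_sq_eq]
  have henergy : RCLike.re ⟪x, T x⟫ = ∑ i, hT.eigenvalues rfl i * ‖b.repr x i‖ ^ 2 := by
    rw [← b.repr.inner_map_map, PiLp.inner_apply, map_sum]
    refine sum_congr rfl fun i _ => ?_
    rw [hT.eigenvectorBasis_apply_self_apply, RCLike.inner_apply, mul_assoc, RCLike.mul_conj]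
    norm_cast
  rw [hnorm, henergy, mul_sum]
  refine sum_le_sum fun i _ => ?_
  by_cases hc : b.repr x i = 0
  · simp [hc]
  have hμ : hT.eigenvalues rfl i ≠ 0 := by
    refine fun h0 => hc ?_
    rw [b.repr_apply_apply]
    exact hx _ (by rw [hT.apply_eigenvectorBasis, h0, RCLike.ofReal_zero, zero_smul])
  gcongr
  exact hlam _ _ hμ (b.orthonormal.ne_zero i) (hT.apply_eigenvectorBasis rfl i)

end InnerProductSpace

theorem SimpleGraph.Reachable.eq_of_forall_adj {V α : Type*} {G : SimpleGraph V} {f : V → α}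
    (hf : ∀ u v, G.Adj u v → f u = f v) {u v : V} (huv : G.Reachable u v) : f u = f v := by
  obtain ⟨p⟩ := huv
  induction p with
  | nil => rfl
  | cons hadj _ ih => exact (hf _ _ hadj).trans ih

section WeightedGraph

variable {V : Type*} [Fintype V] {w : V → V → ℝ}

theorem gip_lap (hsym : ∀ u v, w u v = w v u) (f g : V → ℂ) :
    gip (lap w f) g =
      1 / 2 * ∑ u, ∑ v, (f u - f v) * starRingEnd ℂ (g u - g v) * (w u v : ℂ) := by
  have hexp : gip (lap w f) g = ∑ u, ∑ v, (f u - f v) * (w u v : ℂ) * starRingEnd ℂ (g u) := by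
    simp only [gip, lap, sum_mul]
  have hswap : gip (lap w f) g = ∑ u, ∑ v, (f v - f u) * (w u v : ℂ) * starRingEnd ℂ (g v) := by
    rw [hexp, sum_comm]
    exact sum_congr rfl fun u _ => sum_congr rfl fun v _ => by rw [hsym]
  calc gip (lap w f) g = 1 / 2 * (gip (lap w f) g + gip (lap w f) g) := by ring
    _ = _ := by
      nth_rw 1 [hexp]
      rw [hswap, ← sum_add_distrib]
      refine congrArg _ (sum_congr rfl fun u _ => ?_)
      rw [← sum_add_distrib]
      refine sum_congr rfl fun v _ => ?_
      rw [map_sub]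
      ring

theorem gip_lap_self (hsym : ∀ u v, w u v = w v u) (f : V → ℂ) :
    gip (lap w f) f = gradSq w f := by
  simp only [gip_lap hsym, gradSq, Complex.mul_conj']
  push_cast
  rfl

theorem gradSq_nonneg (hnn : ∀ u v, 0 ≤ w u v) (f : V → ℂ) : 0 ≤ gradSq w f := by
  unfold gradSq
  exact mul_nonneg (by norm_num) <| sum_nonneg fun u _ => sum_nonneg fun v _ =>
    mul_nonneg (sq_nonneg _) (hnn u v)

theorem gradSq_sub_const (w : V → V → ℝ) (f : V → ℂ) (c : ℂ) :
    gradSq w (fun v => f v - c) = gradSq w f := by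
  simp only [gradSq, sub_sub_sub_cancel_right]

theorem gip_eq_inner (f g : V → ℂ) :
    gip f g = inner ℂ (WithLp.toLp 2 g : EuclideanSpace ℂ V) (WithLp.toLp 2 f) := by
  simp only [gip, PiLp.inner_apply, RCLike.inner_apply]

theorem normSq_eq_norm_sq (f : V → ℂ) :
    normSq f = ‖(WithLp.toLp 2 f : EuclideanSpace ℂ V)‖ ^ 2 := by
  simp only [normSq, EuclideanSpace.norm_sq_eq]

theorem IsEigen.nonneg (hsym : ∀ u v, w u v = w v u) (hnn : ∀ u v, 0 ≤ w u v) {μ : ℝ}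
    (hμ : IsEigen w μ) : 0 ≤ μ := by
  obtain ⟨g, hg0, hg⟩ := hμ
  have hpos : 0 < normSq g := by
    rw [normSq_eq_norm_sq]
    exact pow_pos (norm_pos_iff.2 fun h0 => hg0 (congrArg WithLp.ofLp h0)) 2
  have hrayleigh : μ * normSq g = gradSq w g := by
    have h := gip_lap_self hsym g
    simp only [hg, gip, mul_assoc, ← mul_sum, Complex.mul_conj'] at h
    simpa only [normSq, ← Complex.ofReal_pow, ← Complex.ofReal_sum, ← Complex.ofReal_mul,
      Complex.ofReal_inj] using h
  exact nonneg_of_mul_nonneg_left (hrayleigh ▸ gradSq_nonneg hnn g) hpos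

theorem eq_of_gradSq_eq_zero (hnn : ∀ u v, 0 ≤ w u v)
    (hconn : (SimpleGraph.fromRel fun u v : V => w u v ≠ 0).Connected) {g : V → ℂ}
    (hg : gradSq w g = 0) (u v : V) : g u = g v := by
  have hterm_nonneg : ∀ u v, 0 ≤ ‖g u - g v‖ ^ 2 * w u v := fun u v =>
    mul_nonneg (sq_nonneg _) (hnn u v)
  have hterm : ∀ u v, ‖g u - g v‖ ^ 2 * w u v = 0 := by
    have hsum : ∑ u, ∑ v, ‖g u - g v‖ ^ 2 * w u v = 0 := by
      simpa only [gradSq, mul_eq_zero, one_div, inv_eq_zero, OfNat.ofNat_ne_zero, false_or]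
        using hg
    intro u v
    rw [sum_eq_zero_iff_of_nonneg fun u _ => sum_nonneg fun v _ => hterm_nonneg u v] at hsum
    exact (sum_eq_zero_iff_of_nonneg fun v _ => hterm_nonneg u v).1 (hsum u (mem_univ u)) v
      (mem_univ v)
  have hedge : ∀ u v, w u v ≠ 0 → g u = g v := fun u v huv => by
    simpa [huv, sub_eq_zero] using hterm u v
  refine (hconn.preconnected u v).eq_of_forall_adj fun u v hadj => ?_
  obtain ⟨-, huv | hvu⟩ := SimpleGraph.fromRel_adj _ u v |>.1 hadj
  exacts [hedge u v huv, (hedge v u hvu).symm]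

noncomputable def lapLinearMap (w : V → V → ℝ) :
    EuclideanSpace ℂ V →ₗ[ℂ] EuclideanSpace ℂ V where
  toFun x := WithLp.toLp 2 (lap w x.ofLp)
  map_add' x y := by
    ext v
    simp only [lap, PiLp.add_apply, ← sum_add_distrib]
    exact sum_congr rfl fun u _ => by ring
  map_smul' c x := by
    ext v
    simp only [lap, PiLp.smul_apply, smul_eq_mul, RingHom.id_apply, mul_sum]
    exact sum_congr rfl fun u _ => by ring

theorem inner_lapLinearMap (w : V → V → ℝ) (x y : EuclideanSpace ℂ V) :
    inner ℂ x (lapLinearMap w y) = gip (lap w y.ofLp) x.ofLp :=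
  (gip_eq_inner _ _).symm

theorem isSymmetric_lapLinearMap (hsym : ∀ u v, w u v = w v u) :
    (lapLinearMap w).IsSymmetric := by
  intro x y
  rw [← inner_conj_symm, inner_lapLinearMap, inner_lapLinearMap, gip_lap hsym, gip_lap hsym]
  simp only [map_sum, map_mul, Complex.conj_conj, Complex.conj_ofReal, map_div₀, map_one,
    map_ofNat]
  exact congrArg _ (sum_congr rfl fun u _ => sum_congr rfl fun v _ => by ring)

theorem mul_normSq_le_gradSq (hsym : ∀ u v, w u v = w v u) (hnn : ∀ u v, 0 ≤ w u v)
    (hconn : (SimpleGraph.fromRel fun u v : V => w u v ≠ 0).Connected) {lam : ℝ}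
    (hlam : ∀ μ, μ ≠ 0 → IsEigen w μ → lam ≤ μ) {h : V → ℂ} (hh : ∑ v, h v = 0) :
    lam * normSq h ≤ gradSq w h := by
  have hT := isSymmetric_lapLinearMap hsym
  have hker : ∀ y, lapLinearMap w y = 0 → inner ℂ y (WithLp.toLp 2 h) = 0 := by
    intro y hy
    have hconst := eq_of_gradSq_eq_zero hnn hconn (g := y.ofLp) <| by
      have := inner_lapLinearMap w y y
      rw [hy, inner_zero_right, gip_lap_self hsym] at this
      exact_mod_cast this.symm
    rcases isEmpty_or_nonempty V with _ | ⟨⟨v₀⟩⟩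
    · simp [PiLp.inner_apply]
    rw [← gip_eq_inner]
    simp only [gip, hconst _ v₀, ← sum_mul, hh, zero_mul]
  have key := hT.mul_norm_sq_le_re_inner_apply
    (fun μ y hμ hy hTy => hlam μ hμ ⟨y.ofLp, fun h0 => hy (congrArg (WithLp.toLp 2) h0),
      congrArg WithLp.ofLp hTy⟩) hker
  rwa [inner_lapLinearMap, gip_lap_self hsym, ← normSq_eq_norm_sq] at key

theorem sum_sub_mean_eq_zero (f : V → ℂ) : ∑ v, (f v - (∑ u, f u) / Fintype.card V) = 0 := by
  rcases isEmpty_or_nonempty V with _ | _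
  · simp
  rw [sum_sub_distrib, sum_const, card_univ, nsmul_eq_mul,
    mul_div_cancel₀ _ (Nat.cast_ne_zero.2 Fintype.card_ne_zero), sub_self]

theorem normSq_sub_mul_norm_gip_sq_le (f ψ : V → ℂ) {c m : ℂ} (hm : ∑ v, (f v - m) = 0)
    (hc : gip (fun v => f v - c) ψ = 0) :
    normSq (fun v => f v - c) * ‖gip (fun _ => 1) ψ‖ ^ 2 ≤
      Fintype.card V * normSq ψ * normSq (fun v => f v - m) := by
  set e : EuclideanSpace ℂ V := WithLp.toLp 2 fun _ => 1
  have hsub : ∀ t : ℂ, WithLp.toLp 2 (fun v => f v - t) = WithLp.toLp 2 f - t • e := fun t => by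
    ext v
    simp [e]
  have he : ‖e‖ ^ 2 = Fintype.card V := by
    simp [e, ← normSq_eq_norm_sq, normSq]
  have key := norm_sub_smul_sq_mul_norm_inner_sq_le (e := e) (ψ := WithLp.toLp 2 ψ)
    (x := WithLp.toLp 2 f) (s := m) (t := c) ?_ ?_
  · rwa [← hsub, ← hsub, he, ← normSq_eq_norm_sq, ← normSq_eq_norm_sq, ← normSq_eq_norm_sq,
      ← gip_eq_inner] at key
  · simpa [← hsub, ← gip_eq_inner, gip, e] using hm
  · rwa [← hsub, ← gip_eq_inner]

end WeightedGraph

theorem poincare_weighted_mean_general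
    {V : Type*} [Fintype V] (w : V → V → ℝ)
    (hsym : ∀ u v, w u v = w v u) (hnn : ∀ u v, 0 ≤ w u v)
    (hconn : (SimpleGraph.fromRel fun u v : V => w u v ≠ 0).Connected)
    (lam1 : ℝ) (hlam : IsLeast {μ : ℝ | μ ≠ 0 ∧ IsEigen w μ} lam1)
    (ψ : V → ℂ) (hψ : gip (fun _ => 1) ψ ≠ 0)
    (f : V → ℂ) :
    normSq (fun v => f v - gip f ψ / gip (fun _ => 1) ψ) ≤
      ((Fintype.card V : ℝ) * normSq ψ / ‖gip (fun _ => (1 : ℂ)) ψ‖ ^ 2) / lam1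
        * gradSq w f := by
  set a := gip (fun _ => (1 : ℂ)) ψ
  set m : ℂ := (∑ v, f v) / Fintype.card V
  have hlam_pos : 0 < lam1 := (hlam.1.2.nonneg hsym hnn).lt_of_ne' hlam.1.1
  have hpoincare : lam1 * normSq (fun v => f v - m) ≤ gradSq w f := by
    simpa only [gradSq_sub_const] using mul_normSq_le_gradSq hsym hnn hconn
      (fun μ hμ hμw => hlam.2 ⟨hμ, hμw⟩) (sum_sub_mean_eq_zero f)
  have horth : gip (fun v => f v - gip f ψ / a) ψ = 0 := by
    have hlin : ∀ c, gip (fun v => f v - c) ψ = gip f ψ - c * a := fun c => by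
      simp only [gip, a, sub_mul, sum_sub_distrib, mul_sum, one_mul]
    rw [hlin, div_mul_cancel₀ _ hψ, sub_self]
  have hweighted := normSq_sub_mul_norm_gip_sq_le f ψ (sum_sub_mean_eq_zero f) horth
  have ha : 0 < ‖a‖ ^ 2 := by positivity
  calc normSq (fun v => f v - gip f ψ / a)
      ≤ Fintype.card V * normSq ψ * normSq (fun v => f v - m) / ‖a‖ ^ 2 :=
        (le_div_iff₀ ha).2 hweighted
    _ ≤ Fintype.card V * normSq ψ * (gradSq w f / lam1) / ‖a‖ ^ 2 := by
        rw [normSq_eq_norm_sq ψ]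
        gcongr
        exact (le_div_iff₀' hlam_pos).2 hpoincare
    _ = _ := by ring

theorem poincare_weighted_mean
    {V : Type*} [Fintype V] (w : V → V → ℝ)
    (hsym : ∀ u v, w u v = w v u) (hnn : ∀ u v, 0 ≤ w u v)
    (hdiag : ∀ v, w v v = 0)
    (hconn : (SimpleGraph.fromRel fun u v : V => w u v ≠ 0).Connected)
    (hcard : 1 < Fintype.card V)
    (lam1 : ℝ) (hlam : IsLeast {μ : ℝ | μ ≠ 0 ∧ IsEigen w μ} lam1)
    (ψ : V → ℂ) (hψ : gip (fun _ => 1) ψ ≠ 0)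
    (f : V → ℂ) :
    normSq (fun v => f v - gip f ψ / gip (fun _ => 1) ψ) ≤
      ((Fintype.card V : ℝ) * normSq ψ / ‖gip (fun _ => (1 : ℂ)) ψ‖ ^ 2) / lam1
        * gradSq w f :=
  poincare_weighted_mean_general w hsym hnn hconn lam1 hlam ψ hψ f
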